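/- For every λ ∈ ℂ with |λ| < 1, the operator S − λ on H^p(T) is not surjective: the characteristic function of the root is not in its range. Consequently the closed unit disk is contained in the spectrum of S. -/

import Mathlib

open scoped BigOperators
open Classical

/-- An infinite, locally finite rooted tree, presented combinatorially via a
parent function and a level (distance-to-root) function.  Every level is a
finite nonempty set of vertices. -/
structure HTree where
  V : Type
  root : V
  parent : V → V
  level : V → ℕ
  level_root : level root = 0
  root_of_level_zero : ∀ v, level v = 0 → v = root
  level_parent : ∀ v, v ≠ root → level (parent v) + 1 = level v
  finite_level : ∀ n : ℕ, {v : V | level v = n}.Finite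
  nonempty_level : ∀ n : ℕ, {v : V | level v = n}.Nonempty

namespace HTree

variable (T : HTree)

/-- The finite set of vertices at level `n`. -/
noncomputable def levelFinset (n : ℕ) : Finset T.V := (T.finite_level n).toFinset

/-- `γ(n)`, the number of vertices at level `n`. -/
noncomputable def gamma (n : ℕ) : ℕ := (T.levelFinset n).card

/-- The set of `m`-children of a vertex `v`. -/
noncomputable def nChildrenFinset (m : ℕ) (v : T.V) : Finset T.V :=
  (T.levelFinset (T.level v + m)).filter (fun w => T.parent^[m] w = v)

/-- `γ(m,v)`, the number of `m`-children of `v`. -/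
noncomputable def numNChildren (m : ℕ) (v : T.V) : ℕ := (T.nChildrenFinset m v).card

/-- The set of children of a vertex. -/
noncomputable def childrenFinset (v : T.V) : Finset T.V := T.nChildrenFinset 1 v

/-- `γ(1,v)`, the number of children of `v`. -/
noncomputable def numChildren (v : T.V) : ℕ := T.numNChildren 1 v

/-- `K(m,r)`, the maximal number of `m`-children among vertices at level `r`. -/
noncomputable def K (m r : ℕ) : ℕ := (T.levelFinset r).sup (fun v => T.numNChildren m v)

/-- `M_p^p(n,f)`, the `p`-th power of the `p`-th mean of `|f|` over level `n`. -/
noncomputable def Mpp (p : ℝ) (f : T.V → ℂ) (n : ℕ) : ℝ :=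
  (1 / (T.gamma n : ℝ)) * ∑ v ∈ T.levelFinset n, ‖f v‖ ^ p

/-- `M_p(n,f)`, the `p`-th mean of `|f|` over level `n`. -/
noncomputable def Mp (p : ℝ) (f : T.V → ℂ) (n : ℕ) : ℝ := (T.Mpp p f n) ^ (1 / p)

/-- Membership in the Hardy space `H^p(T)`. -/
def MemHp (p : ℝ) (f : T.V → ℂ) : Prop := ∃ C : ℝ, ∀ n : ℕ, T.Mp p f n ≤ C

/-- Membership in the little Hardy space `H^p_0(T)`. -/
def MemHp0 (p : ℝ) (f : T.V → ℂ) : Prop :=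
  Filter.Tendsto (T.Mp p f) Filter.atTop (nhds 0)

/-- The `H^p` norm, `sup_n M_p(n,f)`. -/
noncomputable def Hnorm (p : ℝ) (f : T.V → ℂ) : ℝ := ⨆ n : ℕ, T.Mp p f n

/-- The forward shift `(Sf)(v) = f(parent v)`, `(Sf)(root) = 0`. -/
noncomputable def S (f : T.V → ℂ) : T.V → ℂ := fun v => if v = T.root then 0 else f (T.parent v)

/-- The backward shift `(Bf)(v) = Σ_{w child of v} f(w)`. -/
noncomputable def B (f : T.V → ℂ) : T.V → ℂ := fun v => ∑ w ∈ T.childrenFinset v, f w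

/-- An operator `A` is bounded on the subspace described by `Mem`, with the
`H^p` norm. -/
def BoundedOn (A : (T.V → ℂ) → (T.V → ℂ)) (Mem : (T.V → ℂ) → Prop) (p : ℝ) : Prop :=
  ∃ C : ℝ, 0 ≤ C ∧ ∀ f, Mem f → Mem (A f) ∧ T.Hnorm p (A f) ≤ C * T.Hnorm p f

/-- The operator norm of `A` on the subspace described by `Mem`. -/
noncomputable def opNorm (A : (T.V → ℂ) → (T.V → ℂ)) (Mem : (T.V → ℂ) → Prop) (p : ℝ) : ℝ :=
  sInf {C : ℝ | 0 ≤ C ∧ ∀ f, Mem f → Mem (A f) ∧ T.Hnorm p (A f) ≤ C * T.Hnorm p f}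

/-- Hypercyclicity of an operator `A` on the subspace described by `Mem`. -/
def Hypercyclic (A : (T.V → ℂ) → (T.V → ℂ)) (Mem : (T.V → ℂ) → Prop) (p : ℝ) : Prop :=
  ∃ f, Mem f ∧ ∀ g, Mem g → ∀ ε : ℝ, 0 < ε →
    ∃ N : ℕ, T.Hnorm p (fun v => A^[N] f v - g v) < ε

end HTree

/-! If `(S - z) f = χ_root`, then `-z f(root) = 1` and `f (parent v) = z f(v)` for `v ≠ root`,
so `f = -z^{-(n+1)}` on level `n`. Hence `M_p(n, f) = |z|^{-(n+1)}`, which tends to infinity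
when `|z| < 1`; so `f ∉ H^p(T)`, and a fortiori `f ∉ H^p_0(T) ⊆ H^p(T)`. -/

namespace HTree

variable {T : HTree}

@[simp]
theorem mem_levelFinset {n : ℕ} {v : T.V} : v ∈ T.levelFinset n ↔ T.level v = n := by
  simp [levelFinset]

theorem gamma_pos (n : ℕ) : 0 < T.gamma n := by
  obtain ⟨v, hv⟩ := T.nonempty_level n
  exact Finset.card_pos.mpr ⟨v, mem_levelFinset.mpr hv⟩

theorem Mp_eq_of_forall_norm_eq {p c : ℝ} {f : T.V → ℂ} {n : ℕ} (hp : p ≠ 0) (hc : 0 ≤ c)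
    (hf : ∀ v, T.level v = n → ‖f v‖ = c) : T.Mp p f n = c := by
  have hsum : ∑ v ∈ T.levelFinset n, ‖f v‖ ^ p = T.gamma n * c ^ p := by
    rw [Finset.sum_congr rfl fun v hv => by rw [hf v (mem_levelFinset.mp hv)],
      Finset.sum_const, nsmul_eq_mul, gamma]
  have hγ : (T.gamma n : ℝ) ≠ 0 := by exact_mod_cast (gamma_pos n).ne'
  rw [Mp, Mpp, hsum, one_div, inv_mul_cancel_left₀ hγ, one_div, Real.rpow_rpow_inv hc hp]

theorem memHp_iff_bddAbove {p : ℝ} {f : T.V → ℂ} :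
    T.MemHp p f ↔ BddAbove (Set.range (T.Mp p f)) := by
  simp [MemHp, BddAbove, upperBounds, Set.Nonempty]

theorem MemHp0.memHp {p : ℝ} {f : T.V → ℂ} (hf : T.MemHp0 p f) : T.MemHp p f :=
  memHp_iff_bddAbove.mpr hf.bddAbove_range

theorem not_memHp_of_tendsto_atTop {p : ℝ} {f : T.V → ℂ}
    (hf : Filter.Tendsto (T.Mp p f) Filter.atTop Filter.atTop) : ¬ T.MemHp p f := by
  rw [memHp_iff_bddAbove]
  exact Filter.not_bddAbove_of_tendsto_atTop hf

section RootIndicator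

variable {z : ℂ} {f : T.V → ℂ}

theorem ne_zero_of_S_sub_smul_eq_rootIndicator
    (hf : (fun v => T.S f v - z * f v) = fun v => if v = T.root then (1 : ℂ) else 0) :
    z ≠ 0 := by
  rintro rfl
  simpa [S] using congrFun hf T.root

theorem eq_of_S_sub_smul_eq_rootIndicator
    (hf : (fun v => T.S f v - z * f v) = fun v => if v = T.root then (1 : ℂ) else 0)
    (v : T.V) : f v = -z⁻¹ ^ (T.level v + 1) := by
  have hz := ne_zero_of_S_sub_smul_eq_rootIndicator hf
  induction hn : T.level v generalizing v with
  | zero =>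
    obtain rfl := T.root_of_level_zero v hn
    have hroot : z * f T.root = -1 := by
      simpa [S, neg_eq_iff_eq_neg] using congrFun hf T.root
    calc f T.root = z⁻¹ * (z * f T.root) := (inv_mul_cancel_left₀ hz _).symm
      _ = -z⁻¹ ^ (0 + 1) := by rw [hroot]; ring
  | succ n ih =>
    have hv : v ≠ T.root := by
      rintro rfl
      simp [T.level_root] at hn
    have hparent : f (T.parent v) = z * f v := by
      simpa [S, hv, sub_eq_zero] using congrFun hf v
    have hlevel : T.level (T.parent v) = n := by
      have := T.level_parent v hv
      omega
    calc f v = z⁻¹ * (z * f v) := (inv_mul_cancel_left₀ hz _).symm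
      _ = z⁻¹ * -z⁻¹ ^ (n + 1) := by rw [← hparent, ih (T.parent v) hlevel]
      _ = -z⁻¹ ^ (n + 1 + 1) := by ring

theorem Mp_eq_of_S_sub_smul_eq_rootIndicator {p : ℝ} (hp : p ≠ 0)
    (hf : (fun v => T.S f v - z * f v) = fun v => if v = T.root then (1 : ℂ) else 0)
    (n : ℕ) : T.Mp p f n = ‖z‖⁻¹ ^ (n + 1) :=
  Mp_eq_of_forall_norm_eq hp (by positivity) fun v hv => by
    rw [eq_of_S_sub_smul_eq_rootIndicator hf v, hv, norm_neg, norm_pow, norm_inv]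

theorem tendsto_Mp_atTop_of_S_sub_smul_eq_rootIndicator {p : ℝ} (hp : p ≠ 0) (hz : ‖z‖ < 1)
    (hf : (fun v => T.S f v - z * f v) = fun v => if v = T.root then (1 : ℂ) else 0) :
    Filter.Tendsto (T.Mp p f) Filter.atTop Filter.atTop := by
  have hz0 : 0 < ‖z‖ := norm_pos_iff.mpr (ne_zero_of_S_sub_smul_eq_rootIndicator hf)
  have hgrowth : 1 < ‖z‖⁻¹ := (one_lt_inv₀ hz0).mpr hz
  simp_rw [funext (Mp_eq_of_S_sub_smul_eq_rootIndicator hp hf)]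
  exact (tendsto_pow_atTop_atTop_of_one_lt hgrowth).comp (Filter.tendsto_add_atTop_nat 1)

end RootIndicator

end HTree

/-- for `|λ| < 1`, the characteristic function of the root is not in the
range of `S − λ`, on `H^p(T)` and on `H^p_0(T)`; hence `S − λ` is not surjective. -/
theorem root_char_not_in_range (T : HTree) (p : ℝ) (hp : 1 ≤ p)
    (z : ℂ) (hz : ‖z‖ < 1) :
    (¬ ∃ f : T.V → ℂ, T.MemHp p f ∧
        (fun v => T.S f v - z * f v) = fun v => if v = T.root then (1 : ℂ) else 0) ∧
    (¬ ∃ f : T.V → ℂ, T.MemHp0 p f ∧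
        (fun v => T.S f v - z * f v) = fun v => if v = T.root then (1 : ℂ) else 0) := by
  have not_memHp : ∀ f : T.V → ℂ,
      (fun v => T.S f v - z * f v) = (fun v => if v = T.root then (1 : ℂ) else 0) →
        ¬ T.MemHp p f := fun f hf =>
    HTree.not_memHp_of_tendsto_atTop
      (HTree.tendsto_Mp_atTop_of_S_sub_smul_eq_rootIndicator (by linarith) hz hf)
  exact ⟨fun ⟨f, hmem, hf⟩ => not_memHp f hf hmem,
    fun ⟨f, hmem, hf⟩ => not_memHp f hf hmem.memHp⟩
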